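/- arXiv:2204.03427 — 2 statements merged into one kernel-verified Lean document; each statement's English description precedes it below -/
import Mathlib

section
/- Let D⊂ℝ^d be a bounded connected open domain with C³ boundary, ν>0, and let A∈C²(ℝ,ℝ^d) with A(0)=0 satisfy condition (S): there exist c,C>0 with (Σ_{j=1}^d A_j'(u))·sgn(u) ≥ c|u| − C for all u∈ℝ. Let h be a bounded continuous function on ℝ₊×D̄. Then for any solution u∈C^{1,2} of ∂_t u + div_x A(u) − νΔu = h(t,x) with u|_{∂D}=0, and any T>0, one has ‖u(T,·)‖_{L^∞(D)} ≤ M, where M>0 depends only on T, c, C, ‖h‖_{L^∞}, and the domain D (in particular, M is independent of the initial data u(0,·)). -/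
open Set MeasureTheory Filter Topology

noncomputable section

/-- `d`-dimensional Euclidean space. -/
abbrev Euc (d : ℕ) : Type := EuclideanSpace ℝ (Fin d)

/-- The `j`-th vector of the standard basis. -/
def ebasis (d : ℕ) (j : Fin d) : Euc d := EuclideanSpace.single j 1

/-- Time derivative `∂ₜ u (t,x)`. -/
def dtt {d : ℕ} (u : ℝ → Euc d → ℝ) (t : ℝ) (x : Euc d) : ℝ := deriv (fun s => u s x) t

/-- First spatial differential. -/
def dx1 {d : ℕ} (f : Euc d → ℝ) (x : Euc d) : Euc d →L[ℝ] ℝ := fderiv ℝ f x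

/-- Second spatial differential. -/
def dx2 {d : ℕ} (f : Euc d → ℝ) (x : Euc d) : Euc d →L[ℝ] Euc d →L[ℝ] ℝ :=
  fderiv ℝ (fun y => fderiv ℝ f y) x

/-- Laplacian `Δf(x)`. -/
def lapl {d : ℕ} (f : Euc d → ℝ) (x : Euc d) : ℝ :=
  ∑ j : Fin d, dx2 f x (ebasis d j) (ebasis d j)

/-- `div_x A(f) (x) = Σⱼ ∂_{xⱼ} (Aⱼ(f x))`. -/
def divA {d : ℕ} (A : ℝ → Fin d → ℝ) (f : Euc d → ℝ) (x : Euc d) : ℝ :=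
  ∑ j : Fin d, fderiv ℝ (fun y => A (f y) j) x (ebasis d j)

/-- `div (a(t,·) w(t,·)) (x) = Σⱼ ∂_{xⱼ} (aⱼ(t,x) w(t,x))`. -/
def divAW {d : ℕ} (a : ℝ → Euc d → Euc d) (w : ℝ → Euc d → ℝ) (t : ℝ) (x : Euc d) : ℝ :=
  ∑ j : Fin d, fderiv ℝ (fun y => a t y j * w t y) x (ebasis d j)

/-- The boundary of `D` is of class `C³`: near each boundary point, `D` is the sublevel
set of a `C³` function with non-vanishing differential. -/
def HasC3Boundary {d : ℕ} (D : Set (Euc d)) : Prop :=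
  ∀ x ∈ frontier D, ∃ (U : Set (Euc d)) (ψ : Euc d → ℝ),
    IsOpen U ∧ x ∈ U ∧ ContDiff ℝ 3 ψ ∧ (∀ y ∈ U, fderiv ℝ ψ y ≠ 0) ∧
    D ∩ U = {y ∈ U | ψ y < 0}

/-- A bounded connected open domain with `C³` boundary. -/
def GoodDomain {d : ℕ} (D : Set (Euc d)) : Prop :=
  IsOpen D ∧ IsConnected D ∧ Bornology.IsBounded D ∧ HasC3Boundary D

/-- `u ∈ C^{1,2}(J × D̄)`: continuous on the closed cylinder, once continuously
differentiable in `t` and twice in `x`. -/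
def IsC12On {d : ℕ} (J : Set ℝ) (D : Set (Euc d)) (u : ℝ → Euc d → ℝ) : Prop :=
  ContinuousOn (fun p : ℝ × Euc d => u p.1 p.2) (J ×ˢ closure D) ∧
  (∀ x ∈ closure D, ∀ t ∈ J, DifferentiableAt ℝ (fun s => u s x) t) ∧
  (∀ t ∈ J, ∀ x ∈ closure D, DifferentiableAt ℝ (u t) x) ∧
  (∀ t ∈ J, ∀ x ∈ closure D, DifferentiableAt ℝ (fun y => fderiv ℝ (u t) y) x) ∧
  ContinuousOn (fun p : ℝ × Euc d => dtt u p.1 p.2) (J ×ˢ closure D) ∧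
  ContinuousOn (fun p : ℝ × Euc d => dx1 (u p.1) p.2) (J ×ˢ closure D) ∧
  ContinuousOn (fun p : ℝ × Euc d => dx2 (u p.1) p.2) (J ×ˢ closure D)

/-- `N` bounds both the sup-norm and the parabolic Hölder seminorm of exponent `γ`
of `f` on `J × D̄`. -/
def parHolderBound {d : ℕ} {Y : Type*} [NormedAddCommGroup Y] (γ : ℝ) (J : Set ℝ)
    (D : Set (Euc d)) (f : ℝ → Euc d → Y) (N : ℝ) : Prop :=
  (∀ t ∈ J, ∀ x ∈ closure D, ‖f t x‖ ≤ N) ∧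
  ∀ t₁ ∈ J, ∀ t₂ ∈ J, ∀ x₁ ∈ closure D, ∀ x₂ ∈ closure D,
    ‖f t₁ x₁ - f t₂ x₂‖ ≤ N * (|t₁ - t₂| ^ (γ / 2) + ‖x₁ - x₂‖ ^ γ)

/-- The parabolic Hölder norm `|||f|||_γ` on `J × D̄` (up to equivalence). -/
def parHolderNorm {d : ℕ} {Y : Type*} [NormedAddCommGroup Y] (γ : ℝ) (J : Set ℝ)
    (D : Set (Euc d)) (f : ℝ → Euc d → Y) : ℝ :=
  sInf {N : ℝ | 0 ≤ N ∧ parHolderBound γ J D f N}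

/-- `h ∈ C^{γ/2,γ}(J × D̄)`. -/
def MemParHolder {d : ℕ} (γ : ℝ) (J : Set ℝ) (D : Set (Euc d)) (h : ℝ → Euc d → ℝ) : Prop :=
  ContinuousOn (fun p : ℝ × Euc d => h p.1 p.2) (J ×ˢ closure D) ∧
  ∃ N, parHolderBound γ J D h N

/-- `N` bounds the `X^γ(J × D̄)` norm of `u`. -/
def XgammaBound {d : ℕ} (γ : ℝ) (J : Set ℝ) (D : Set (Euc d)) (u : ℝ → Euc d → ℝ)
    (N : ℝ) : Prop :=
  (∀ t ∈ J, ∀ x ∈ closure D, |u t x| ≤ N) ∧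
  parHolderBound γ J D (fun t x => dtt u t x) N ∧
  parHolderBound γ J D (fun t x => dx1 (u t) x) N ∧
  parHolderBound γ J D (fun t x => dx2 (u t) x) N

/-- The `X^γ(J × D̄)` norm (up to equivalence). -/
def XgammaNorm {d : ℕ} (γ : ℝ) (J : Set ℝ) (D : Set (Euc d)) (u : ℝ → Euc d → ℝ) : ℝ :=
  sInf {N : ℝ | 0 ≤ N ∧ XgammaBound γ J D u N}

/-- `u ∈ X^γ(J × D̄)`. -/
def MemXgamma {d : ℕ} (γ : ℝ) (J : Set ℝ) (D : Set (Euc d)) (u : ℝ → Euc d → ℝ) : Prop :=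
  IsC12On J D u ∧ ∃ N, XgammaBound γ J D u N

/-- `N` bounds the sup and the `γ`-Hölder seminorm of `f` on `S`. -/
def holderBoundOn {X Y : Type*} [NormedAddCommGroup X] [NormedAddCommGroup Y]
    (γ : ℝ) (S : Set X) (f : X → Y) (N : ℝ) : Prop :=
  (∀ x ∈ S, ‖f x‖ ≤ N) ∧ ∀ x ∈ S, ∀ y ∈ S, ‖f x - f y‖ ≤ N * ‖x - y‖ ^ γ

/-- `N` bounds the `C^{2+γ}(D̄)` norm of `g`. -/
def C2gammaBound {d : ℕ} (γ : ℝ) (D : Set (Euc d)) (g : Euc d → ℝ) (N : ℝ) : Prop :=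
  holderBoundOn γ (closure D) g N ∧
  holderBoundOn γ (closure D) (fun x => dx1 g x) N ∧
  holderBoundOn γ (closure D) (fun x => dx2 g x) N

/-- The `C^{2+γ}(D̄)` norm (up to equivalence). -/
def C2gammaNorm {d : ℕ} (γ : ℝ) (D : Set (Euc d)) (g : Euc d → ℝ) : ℝ :=
  sInf {N : ℝ | 0 ≤ N ∧ C2gammaBound γ D g N}

/-- `g ∈ C^{2+γ}(D̄)`. -/
def MemC2gamma {d : ℕ} (γ : ℝ) (D : Set (Euc d)) (g : Euc d → ℝ) : Prop :=
  (∀ x ∈ closure D, DifferentiableAt ℝ g x ∧ DifferentiableAt ℝ (fun y => fderiv ℝ g y) x) ∧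
  ∃ N, C2gammaBound γ D g N

/-- `u` satisfies `∂ₜu + div_x A(u) - ν Δu = h` for `t ∈ Jpde`, `x ∈ D`. -/
def SolvesPDE {d : ℕ} (ν : ℝ) (A : ℝ → Fin d → ℝ) (Jpde : Set ℝ) (D : Set (Euc d))
    (h u : ℝ → Euc d → ℝ) : Prop :=
  ∀ t ∈ Jpde, ∀ x ∈ D, dtt u t x + divA A (u t) x - ν * lapl (u t) x = h t x

/-- Homogeneous Dirichlet boundary condition on `J × ∂D`. -/
def DirichletBC {d : ℕ} (J : Set ℝ) (D : Set (Euc d)) (u : ℝ → Euc d → ℝ) : Prop :=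
  ∀ t ∈ J, ∀ x ∈ frontier D, u t x = 0

/-- The compatibility conditions on `∂D`. -/
def CompatCond {d : ℕ} (ν : ℝ) (A : ℝ → Fin d → ℝ) (D : Set (Euc d))
    (h : ℝ → Euc d → ℝ) (u₀ : Euc d → ℝ) : Prop :=
  ∀ x ∈ frontier D, u₀ x = 0 ∧ divA A u₀ x - ν * lapl u₀ x - h 0 x = 0

/-- The sign condition (S): `(Σⱼ Aⱼ'(u)) sgn u ≥ c|u| - C`. -/
def SignCondition {d : ℕ} (A : ℝ → Fin d → ℝ) (c C : ℝ) : Prop :=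
  ∀ u : ℝ, c * |u| - C ≤ (∑ j : Fin d, deriv (fun v => A v j) u) * Real.sign u

/-- The `L¹(D)` norm. -/
def L1norm {d : ℕ} (D : Set (Euc d)) (f : Euc d → ℝ) : ℝ := ∫ x in D, |f x|

/-- The `L^∞(D)` norm (of a bounded continuous function). -/
def supNorm {d : ℕ} (D : Set (Euc d)) (f : Euc d → ℝ) : ℝ :=
  sSup ((fun x => |f x|) '' closure D)

/-- The piecewise constant control from Theorem 2.2: `ξ(t) = ξₖ` for
`t ∈ [k - 1/2, k - 1/2 + τₖ)` (where `k - 1 ≤ t < k`, `k ≥ 1`) and `ξ(t) = 0` otherwise. -/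
def ctrl (ξs τs : ℕ → ℝ) (t : ℝ) : ℝ :=
  Set.indicator
    (Set.Ico (((⌊t⌋₊ + 1 : ℕ) : ℝ) - 1/2) ((((⌊t⌋₊ + 1 : ℕ) : ℝ) - 1/2) + τs (⌊t⌋₊ + 1)))
    (fun _ => ξs (⌊t⌋₊ + 1)) t

/-- `ξ` is piecewise constant on `[0, T]`. -/
def PiecewiseConstOn (ξ : ℝ → ℝ) (T : ℝ) : Prop :=
  ∃ n : ℕ, ∃ τ : ℕ → ℝ, τ 0 = 0 ∧ τ n = T ∧ (∀ k < n, τ k < τ (k + 1)) ∧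
    ∀ k < n, ∀ t ∈ Ico (τ k) (τ (k + 1)), ξ t = ξ (τ k)

/-- `u` is the solution of the controlled problem with control `ξ(t) φ(x)`: a continuous curve
in `C^{2+γ}(D̄)` satisfying the initial and boundary conditions and solving the PDE on every
interval of constancy of `ξ` (i.e. at every time at which `ξ` is locally constant). -/
def IsCtrlSolOn {d : ℕ} (γ ν : ℝ) (A : ℝ → Fin d → ℝ) (D : Set (Euc d))
    (h : ℝ → Euc d → ℝ) (φ : Euc d → ℝ) (ξ : ℝ → ℝ) (u₀ : Euc d → ℝ)
    (J Jo : Set ℝ) (u : ℝ → Euc d → ℝ) : Prop :=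
  ContinuousOn (fun p : ℝ × Euc d => u p.1 p.2) (J ×ˢ closure D) ∧
  (∀ t ∈ J, MemC2gamma γ D (u t)) ∧
  DirichletBC J D u ∧
  (∀ x ∈ closure D, u 0 x = u₀ x) ∧
  ∀ t ∈ Jo, (∀ᶠ s in nhds t, ξ s = ξ t) →
    (∀ x ∈ closure D, DifferentiableAt ℝ (fun s => u s x) t) ∧
    ∀ x ∈ D, dtt u t x + divA A (u t) x - ν * lapl (u t) x = h t x + ξ t * φ x

/-!
Comparison with an explicit barrier `m(t) w(x)`, where `m(t) = 2/(c t) + K` and, for a sign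
`σ = ±1`, `w(x) = 1 + R + σ Σⱼ xⱼ` with `R` bounding `|Σⱼ xⱼ|` on `D̄` (so `1 ≤ w ≤ 1 + 2R`).
Because `m` blows up at `t = 0`, `σ u < m w` holds at some small time `δ > 0`, whatever the
initial data. At a first touching point `(tₛ, xₛ)`, interior since `u = 0` on `∂D`, one has
`σ ∂ₜu ≥ m' w`, `σ Δu ≤ 0` and `∇u = m (1, …, 1)`, hence `div A(u) = m Σⱼ Aⱼ'(u)` and the sign
condition gives `σ div A(u) ≥ m (c m w - C)`. The equation then forces
`m' w + m (c m w - C) ≤ ‖h‖_∞`, which fails once `c K` exceeds `‖h‖_∞ + C + c`.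
So `|u(T, ·)| ≤ m(T) (1 + 2R)`.
-/

theorem HasDerivAt.nonneg_of_forall_Icc_le {ψ : ℝ → ℝ} {a b L : ℝ} (hab : a < b)
    (hψ : HasDerivAt ψ L b) (hmax : ∀ s ∈ Icc a b, ψ s ≤ ψ b) : 0 ≤ L := by
  have hcone : a - b ∈ posTangentConeAt (Icc a b) b :=
    sub_mem_posTangentConeAt_of_segment_subset
      (by rw [segment_symm, segment_eq_Icc hab.le])
  have := (isMaxOn_iff.2 hmax).localize.hasFDerivWithinAt_nonpos
    hψ.hasFDerivAt.hasFDerivWithinAt hcone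
  simp only [ContinuousLinearMap.toSpanSingleton_apply, smul_eq_mul] at this
  exact nonneg_of_mul_nonpos_right this (sub_neg.2 hab)

theorem IsLocalMax.hasDerivAt_deriv_nonpos {g g' : ℝ → ℝ} {x D2 : ℝ} (hmax : IsLocalMax g x)
    (hg : ∀ᶠ y in 𝓝 x, HasDerivAt g (g' y) y) (hg' : HasDerivAt g' D2 x) : D2 ≤ 0 := by
  have hderiv : deriv g =ᶠ[𝓝 x] g' := hg.mono fun y hy => hy.deriv
  have hD2 : deriv (deriv g) x = D2 := (hderiv.deriv_eq).trans hg'.deriv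
  -- if `D2 > 0`, then `x` is also a local minimum, so `g` is locally constant and `D2 = 0`
  by_contra! hpos
  have hmin : IsLocalMin g x := isLocalMin_of_deriv_deriv_pos (hD2 ▸ hpos)
    hmax.deriv_eq_zero hg.self_of_nhds.continuousAt
  have hconst : deriv g =ᶠ[𝓝 x] fun _ => 0 := by
    have : g =ᶠ[𝓝 x] fun _ => g x :=
      (hmax.and hmin).mono fun y hy => le_antisymm hy.1 hy.2
    exact this.deriv.trans (by simp)
  rw [hconst.deriv_eq, deriv_const] at hD2
  linarith

theorem IsLocalMax.hasFDerivAt_apply_self_nonpos {E : Type*} [NormedAddCommGroup E]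
    [NormedSpace ℝ E] {f : E → ℝ} {f' : E → E →L[ℝ] ℝ} {f'' : E →L[ℝ] E →L[ℝ] ℝ} {x : E}
    (hmax : IsLocalMax f x) (hf : ∀ᶠ y in 𝓝 x, HasFDerivAt f (f' y) y)
    (hf' : HasFDerivAt f' f'' x) (v : E) : f'' v v ≤ 0 := by
  set ℓ : ℝ → E := fun r => x + r • v
  have hℓ : ∀ r, HasDerivAt ℓ v r := fun r => by
    simpa only [id, one_smul] using ((hasDerivAt_id r).smul_const v).const_add x
  have hℓ0 : ℓ 0 = x := by simp [ℓ]
  have hℓx : Tendsto ℓ (𝓝 0) (𝓝 x) := hℓ0 ▸ (hℓ 0).continuousAt.tendsto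
  refine IsLocalMax.hasDerivAt_deriv_nonpos (g := f ∘ ℓ) (g' := fun r => f' (ℓ r) v) (x := 0)
    ?_ ?_ ?_
  · have hmax' : IsLocalMax f (ℓ 0) := by rwa [hℓ0]
    exact hmax'.comp_continuous (hℓ 0).continuousAt
  · filter_upwards [hℓx.eventually hf] with r hr using hr.comp_hasDerivAt r (hℓ r)
  · rw [← hℓ0] at hf'
    have := hf'.comp_hasDerivAt 0 (hℓ 0)
    exact ((ContinuousLinearMap.apply ℝ ℝ v).hasFDerivAt).comp_hasDerivAt 0 this

theorem exists_first_zero_of_neg_start {X : Type*} [TopologicalSpace X] [T2Space X] {K : Set X}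
    (hK : IsCompact K) {a b : ℝ} {G : ℝ → X → ℝ}
    (hG : ContinuousOn (fun p : ℝ × X => G p.1 p.2) (Icc a b ×ˢ K))
    (hstart : ∀ x ∈ K, G a x < 0) (hreach : ∃ t ∈ Icc a b, ∃ x ∈ K, 0 ≤ G t x) :
    ∃ ts ∈ Ioc a b, ∃ xs ∈ K, G ts xs = 0 ∧ ∀ s ∈ Icc a ts, ∀ x ∈ K, G s x ≤ 0 := by
  set Z : Set (ℝ × X) := (Icc a b ×ˢ K) ∩ (fun p : ℝ × X => G p.1 p.2) ⁻¹' Ici 0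
  have hZ : IsCompact Z := (isCompact_Icc.prod hK).of_isClosed_subset
    (hG.preimage_isClosed_of_isClosed (isClosed_Icc.prod hK.isClosed) isClosed_Ici)
    inter_subset_left
  obtain ⟨t, ht, x, hx, hGtx⟩ := hreach
  obtain ⟨⟨ts, xs⟩, ⟨⟨htsI, hxs⟩, hGs⟩, hfirst⟩ :=
    hZ.exists_isMinOn ⟨(t, x), ⟨⟨ht, hx⟩, hGtx⟩⟩ continuous_fst.continuousOn
  have hbefore : ∀ s ∈ Ico a ts, ∀ x ∈ K, G s x < 0 := fun s hs x hx => by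
    by_contra! hge
    exact (isMinOn_iff.1 hfirst (s, x) ⟨⟨⟨hs.1, hs.2.le.trans htsI.2⟩, hx⟩, hge⟩).not_gt hs.2
  have hats : a < ts := htsI.1.lt_of_ne fun h => (hstart xs hxs).not_ge (h ▸ hGs)
  have hat : ∀ x ∈ K, G ts x ≤ 0 := fun x hx => by
    have hcont : ContinuousOn (fun s => G s x) (Icc a b) :=
      hG.comp (continuous_id.prodMk continuous_const).continuousOn fun s hs => ⟨hs, hx⟩
    refine ContinuousWithinAt.closure_le (by simp [closure_Ico hats.ne, hats.le])
      ((hcont ts htsI).mono fun s hs => ⟨hs.1, hs.2.le.trans htsI.2⟩) continuousWithinAt_const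
      fun s hs => (hbefore s hs x hx).le
  refine ⟨ts, ⟨hats, htsI.2⟩, xs, hxs, le_antisymm (hat xs hxs) hGs, fun s hs x hx => ?_⟩
  rcases hs.2.lt_or_eq with hlt | rfl
  exacts [(hbefore s ⟨hs.1, hlt⟩ x hx).le, hat x hx]

def sumCoord (d : ℕ) : Euc d →L[ℝ] ℝ := ∑ j, EuclideanSpace.proj j

@[simp]
theorem sumCoord_ebasis {d : ℕ} (j : Fin d) : sumCoord d (ebasis d j) = 1 := by
  simp [sumCoord, ebasis]

theorem SignCondition.le_mul_sum_deriv {d : ℕ} {A : ℝ → Fin d → ℝ} {c C : ℝ}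
    (hS : SignCondition A c C) {σ r : ℝ} (hσ : σ = 1 ∨ σ = -1) (hr : 0 < r) :
    c * r - C ≤ σ * ∑ j, deriv (fun v => A v j) (σ * r) := by
  have := hS (σ * r)
  rcases hσ with rfl | rfl
  · simpa [abs_of_pos hr, Real.sign_of_pos hr, mul_comm] using this
  · simpa [abs_of_pos hr, Real.sign_of_neg (neg_neg_of_pos hr), mul_comm] using this

theorem divA_eq_mul_sum_deriv {d : ℕ} {A : ℝ → Fin d → ℝ}
    (hA : ∀ j, Differentiable ℝ fun v => A v j) {f : Euc d → ℝ} {x : Euc d} {a : ℝ}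
    (hf : DifferentiableAt ℝ f x) (hfa : ∀ j, fderiv ℝ f x (ebasis d j) = a) :
    divA A f x = a * ∑ j, deriv (fun v => A v j) (f x) := by
  rw [divA, Finset.mul_sum]
  refine Finset.sum_congr rfl fun j _ => ?_
  have hcomp : HasFDerivAt (fun y => A (f y) j)
      (deriv (fun v => A v j) (f x) • fderiv ℝ f x) x :=
    (hA j (f x)).hasDerivAt.comp_hasFDerivAt x hf.hasFDerivAt
  simp [hcomp.fderiv, hfa, mul_comm]

section MaximumPrinciple

variable {d : ℕ} {f g : Euc d → ℝ} {L : Euc d →L[ℝ] ℝ} {σ : ℝ} {x : Euc d}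

theorem IsLocalMax.smul_fderiv_eq_of_sub (hmax : IsLocalMax (fun y => σ * f y - g y) x)
    (hg : HasFDerivAt g L x) (hf : DifferentiableAt ℝ f x) : σ • fderiv ℝ f x = L :=
  sub_eq_zero.1 <| hmax.hasFDerivAt_eq_zero ((hf.hasFDerivAt.const_mul σ).sub hg)

theorem IsLocalMax.mul_lapl_nonpos_of_sub (hmax : IsLocalMax (fun y => σ * f y - g y) x)
    (hg : ∀ y, HasFDerivAt g L y) (hf : ∀ᶠ y in 𝓝 x, DifferentiableAt ℝ f y)
    (hf2 : DifferentiableAt ℝ (fderiv ℝ f) x) : σ * lapl f x ≤ 0 := by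
  have hφ : ∀ᶠ y in 𝓝 x,
      HasFDerivAt (fun y => σ * f y - g y) (σ • fderiv ℝ f y - L) y :=
    hf.mono fun y hy => (hy.hasFDerivAt.const_mul σ).sub (hg y)
  have hφ' : HasFDerivAt (fun y => σ • fderiv ℝ f y - L) (σ • dx2 f x) x :=
    (hf2.hasFDerivAt.const_smul σ).sub_const L
  rw [lapl, Finset.mul_sum]
  refine Finset.sum_nonpos fun j _ => ?_
  simpa using hmax.hasFDerivAt_apply_self_nonpos hφ hφ' (ebasis d j)

end MaximumPrinciple

theorem barrier_strict_supersolution {c C Hb K p w : ℝ} (hc : 0 < c) (hC : 0 < C)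
    (hHb : 0 ≤ Hb) (hK : c * K = Hb + C + c + 1) (hp : 0 < p) (hw : 1 ≤ w) :
    Hb < -(2 / c) * p ^ 2 * w + (2 / c * p + K) * (c * ((2 / c * p + K) * w) - C) := by
  suffices c * Hb < -2 * p ^ 2 * w + (2 * p + c * K) * ((2 * p + c * K) * w - C) by
    have e : c * (-(2 / c) * p ^ 2 * w + (2 / c * p + K) * (c * ((2 / c * p + K) * w) - C))
        = -2 * p ^ 2 * w + (2 * p + c * K) * ((2 * p + c * K) * w - C) := by
      field_simp
    nlinarith
  rw [hK]
  have hq : 0 ≤ 2 * p ^ 2 + 4 * p * (Hb + C + c + 1) + (Hb + C + c + 1) ^ 2 := by positivity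
  nlinarith [mul_le_mul_of_nonneg_left hw hq]

theorem barrier_touch_le {d : ℕ} {D : Set (Euc d)} (hDo : IsOpen D) {ν σ c C Hb : ℝ}
    (hν : 0 ≤ ν) (hσ : σ = 1 ∨ σ = -1) {A : ℝ → Fin d → ℝ}
    (hA : ∀ j, Differentiable ℝ fun v => A v j) (hS : SignCondition A c C)
    {h u : ℝ → Euc d → ℝ} (hu : IsC12On (Ici 0) D u) (hpde : SolvesPDE ν A (Ioi 0) D h u)
    {m : ℝ → ℝ} {w : Euc d → ℝ} {m' δ ts : ℝ} {xs : Euc d}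
    (hm : HasDerivAt m m' ts) (hmpos : 0 < m ts) (hw : ∀ y, HasFDerivAt w (σ • sumCoord d) y)
    (hwpos : 0 < w xs) (hδts : δ < ts) (hts : 0 < ts) (hxs : xs ∈ D)
    (hhb : |h ts xs| ≤ Hb) (hzero : σ * u ts xs = m ts * w xs)
    (hbelow : ∀ s ∈ Icc δ ts, ∀ y ∈ D, σ * u s y ≤ m s * w y) :
    m' * w xs + m ts * (c * (m ts * w xs) - C) ≤ Hb := by
  have hσσ : σ * σ = 1 := by rcases hσ with rfl | rfl <;> norm_num
  have hσabs : |σ| = 1 := by rcases hσ with rfl | rfl <;> norm_num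
  have hudiff : ∀ y ∈ D, DifferentiableAt ℝ (u ts) y := fun y hy =>
    hu.2.2.1 ts hts.le y (subset_closure hy)
  have hmw : ∀ y, HasFDerivAt (fun y => m ts * w y) (m ts • σ • sumCoord d) y := fun y =>
    (hw y).const_mul _
  have hmax : IsLocalMax (fun y => σ * u ts y - m ts * w y) xs := by
    filter_upwards [hDo.mem_nhds hxs] with y hy
    linarith [hbelow ts ⟨hδts.le, le_rfl⟩ y hy]
  have hgrad : ∀ j, fderiv ℝ (u ts) xs (ebasis d j) = m ts := fun j => by
    have := congrArg (· (ebasis d j)) (hmax.smul_fderiv_eq_of_sub (hmw xs) (hudiff xs hxs))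
    simp only [smul_apply, smul_eq_mul, sumCoord_ebasis, mul_one] at this
    linear_combination σ * this - (fderiv ℝ (u ts) xs (ebasis d j) - m ts) * hσσ
  have hlapl : σ * lapl (u ts) xs ≤ 0 :=
    hmax.mul_lapl_nonpos_of_sub hmw (eventually_of_mem (hDo.mem_nhds hxs) hudiff)
      (hu.2.2.2.1 ts hts.le xs (subset_closure hxs))
  have htime : m' * w xs ≤ σ * dtt u ts xs := by
    have hψ : HasDerivAt (fun s => σ * u s xs - m s * w xs) (σ * dtt u ts xs - m' * w xs) ts :=
      ((hu.2.1 xs (subset_closure hxs) ts hts.le).hasDerivAt.const_mul σ).sub (hm.mul_const _)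
    have := hψ.nonneg_of_forall_Icc_le hδts fun s hs => by
      linarith [hbelow s hs xs hxs]
    linarith
  have hdiv : m ts * (c * (m ts * w xs) - C) ≤ σ * divA A (u ts) xs := by
    have hut : u ts xs = σ * (m ts * w xs) := by linear_combination σ * hzero - u ts xs * hσσ
    rw [divA_eq_mul_sum_deriv hA (hudiff xs hxs) hgrad, hut]
    calc m ts * (c * (m ts * w xs) - C)
        ≤ m ts * (σ * ∑ j, deriv (fun v => A v j) (σ * (m ts * w xs))) :=
          mul_le_mul_of_nonneg_left (hS.le_mul_sum_deriv hσ (mul_pos hmpos hwpos)) hmpos.le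
      _ = _ := by ring
  have hσh : σ * h ts xs ≤ Hb := by
    calc σ * h ts xs ≤ |σ * h ts xs| := le_abs_self _
      _ ≤ Hb := by rwa [abs_mul, hσabs, one_mul]
  have hdtt : σ * dtt u ts xs = σ * h ts xs - σ * divA A (u ts) xs + ν * (σ * lapl (u ts) xs) := by
    linear_combination σ * hpde ts hts xs hxs
  nlinarith [mul_nonpos_of_nonneg_of_nonpos hν hlapl]

theorem mul_lt_of_strict_supersolution {d : ℕ} {D : Set (Euc d)} (hDo : IsOpen D)
    (hDc : IsCompact (closure D)) {ν σ c C Hb δ T : ℝ} (hν : 0 ≤ ν) (hσ : σ = 1 ∨ σ = -1)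
    {A : ℝ → Fin d → ℝ} (hA : ∀ j, Differentiable ℝ fun v => A v j) (hS : SignCondition A c C)
    {h u : ℝ → Euc d → ℝ} (hhb : ∀ t ∈ Ici (0:ℝ), ∀ x ∈ closure D, |h t x| ≤ Hb)
    (hu : IsC12On (Ici 0) D u) (hpde : SolvesPDE ν A (Ioi 0) D h u)
    (hbc : DirichletBC (Ici 0) D u) {m m' : ℝ → ℝ} {w : Euc d → ℝ} (hδ : 0 < δ)
    (hm : ∀ t, 0 < t → HasDerivAt m (m' t) t) (hmpos : ∀ t, 0 < t → 0 < m t)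
    (hw : ∀ y, HasFDerivAt w (σ • sumCoord d) y) (hwpos : ∀ x ∈ closure D, 0 < w x)
    (hsuper : ∀ t, 0 < t → ∀ x ∈ closure D, Hb < m' t * w x + m t * (c * (m t * w x) - C))
    (hstart : ∀ x ∈ closure D, σ * u δ x < m δ * w x) :
    ∀ t ∈ Icc δ T, ∀ x ∈ closure D, σ * u t x < m t * w x := by
  set G : ℝ → Euc d → ℝ := fun t x => σ * u t x - m t * w x
  have hpos : ∀ t ∈ Icc δ T, 0 < t := fun t ht => hδ.trans_le ht.1
  have hGcont : ContinuousOn (fun p : ℝ × Euc d => G p.1 p.2) (Icc δ T ×ˢ closure D) := by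
    have hmc : ContinuousOn m (Icc δ T) := fun t ht =>
      (hm t (hpos t ht)).continuousAt.continuousWithinAt
    have hwc : Continuous w := continuous_iff_continuousAt.2 fun y => (hw y).continuousAt
    have huc := hu.1.mono (prod_mono (fun t ht => (hpos t ht).le) subset_rfl)
    exact (continuousOn_const.mul huc).sub
      ((hmc.comp continuousOn_fst fun p hp => hp.1).mul (hwc.comp continuous_snd).continuousOn)
  by_contra! hreach
  obtain ⟨ts, hts, xs, hxs, hG0, hbelow⟩ := exists_first_zero_of_neg_start hDc hGcont
    (fun x hx => sub_neg.2 (hstart x hx)) (by simpa only [G, sub_nonneg] using hreach)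
  have hts0 : 0 < ts := hδ.trans hts.1
  have hxsD : xs ∈ D := by
    by_contra hxsD
    have hfr : xs ∈ frontier D := ⟨hxs, by rwa [hDo.interior_eq]⟩
    have : G ts xs < 0 := by
      simp only [G, hbc ts hts0.le xs hfr, mul_zero, zero_sub, neg_neg_iff_pos]
      exact mul_pos (hmpos ts hts0) (hwpos xs hxs)
    exact this.ne hG0
  have hle := barrier_touch_le hDo hν hσ hA hS hu hpde (hm ts hts0) (hmpos ts hts0) hw
    (hwpos xs hxs) hts.1 hts0 hxsD (hhb ts hts0.le xs hxs) (sub_eq_zero.1 hG0)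
    fun s hs y hy => sub_nonpos.1 (hbelow s hs y (subset_closure hy))
  exact (hsuper ts hts0 xs hxs).not_ge hle

theorem mul_le_barrier {d : ℕ} {D : Set (Euc d)} (hDo : IsOpen D) (hDc : IsCompact (closure D))
    {R c C Hb K T ν σ : ℝ} (hR : ∀ x ∈ closure D, |sumCoord d x| ≤ R) (hc : 0 < c)
    (hC : 0 < C) (hHb : 0 ≤ Hb) (hK : c * K = Hb + C + c + 1) (hT : 0 < T) (hν : 0 ≤ ν)
    (hσ : σ = 1 ∨ σ = -1) {A : ℝ → Fin d → ℝ} (hA : ∀ j, Differentiable ℝ fun v => A v j)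
    (hS : SignCondition A c C) {h u : ℝ → Euc d → ℝ}
    (hhb : ∀ t ∈ Ici (0:ℝ), ∀ x ∈ closure D, |h t x| ≤ Hb) (hu : IsC12On (Ici 0) D u)
    (hpde : SolvesPDE ν A (Ioi 0) D h u) (hbc : DirichletBC (Ici 0) D u) :
    ∀ x ∈ closure D, σ * u T x ≤ (2 / c * T⁻¹ + K) * (1 + 2 * R) := by
  have hσabs : ∀ r, |σ * r| = |r| := fun r => by rcases hσ with rfl | rfl <;> simp
  have hKpos : 0 < K := by nlinarith
  set m : ℝ → ℝ := fun t => 2 / c * t⁻¹ + K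
  set w : Euc d → ℝ := fun x => 1 + R + σ * sumCoord d x
  have hmpos : ∀ t, 0 < t → 0 < m t := fun t ht => by positivity
  have hm : ∀ t, 0 < t → HasDerivAt m (-(2 / c) * t⁻¹ ^ 2) t := fun t ht => by
    simpa [inv_pow, m] using ((hasDerivAt_inv ht.ne').const_mul (2 / c)).add_const K
  have hw : ∀ x ∈ closure D, 1 ≤ w x ∧ w x ≤ 1 + 2 * R := fun x hx => by
    have := (hσabs _).trans_le (hR x hx)
    constructor <;> linarith [abs_le.1 this]
  obtain ⟨B, hB⟩ := (isCompact_Icc.prod hDc).exists_bound_of_continuousOn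
    (hu.1.mono (prod_mono Icc_subset_Ici_self subset_rfl) : ContinuousOn _ (Icc 0 T ×ˢ _))
  obtain ⟨δ, hBδ, hδ⟩ := (((tendsto_inv_nhdsGT_zero.const_mul_atTop
    (by positivity : 0 < 2 / c)).eventually (eventually_gt_atTop B)).and (Ioo_mem_nhdsGT hT)).exists
  have hstart : ∀ x ∈ closure D, σ * u δ x < m δ * w x := fun x hx => by
    have hux : σ * u δ x ≤ B :=
      (le_abs_self _).trans <| (hσabs _).trans_le (hB (δ, x) ⟨⟨hδ.1.le, hδ.2.le⟩, hx⟩)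
    nlinarith [(hw x hx).1, hmpos δ hδ.1]
  have hlt := mul_lt_of_strict_supersolution hDo hDc hν hσ hA hS hhb hu hpde hbc hδ.1 hm hmpos
    (fun y => ((sumCoord d).hasFDerivAt.const_mul σ).const_add (1 + R))
    (fun x hx => one_pos.trans_le (hw x hx).1)
    (fun t ht x hx => barrier_strict_supersolution hc hC hHb hK (inv_pos.2 ht) (hw x hx).1)
    hstart (T := T)
  intro x hx
  nlinarith [hlt T ⟨hδ.2.le, le_rfl⟩ x hx, (hw x hx).2, hmpos T hT]

/-- Proposition 1.4: a priori `L^∞` bound at time `T` for solutions of the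
damped conservation law, with a constant depending only on `T`, `c`, `C`, `‖h‖_{L^∞}` and `D`
(in particular independent of `ν`, of `A` satisfying the sign condition, and of the
initial data). -/
theorem stmt_3 {d : ℕ} (D : Set (Euc d)) (hD : GoodDomain D)
    (c C T Hb : ℝ) (hc : 0 < c) (hC : 0 < C) (hT : 0 < T) (hHb : 0 ≤ Hb) :
    ∃ M : ℝ, 0 < M ∧
      ∀ ν : ℝ, 0 < ν → ∀ A : ℝ → Fin d → ℝ, ContDiff ℝ 2 A → A 0 = 0 →
        SignCondition A c C →
        ∀ h u : ℝ → Euc d → ℝ,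
          ContinuousOn (fun p : ℝ × Euc d => h p.1 p.2) (Ici 0 ×ˢ closure D) →
          (∀ t ∈ Ici (0:ℝ), ∀ x ∈ closure D, |h t x| ≤ Hb) →
          IsC12On (Ici 0) D u →
          SolvesPDE ν A (Ioi 0) D h u →
          DirichletBC (Ici 0) D u →
          ∀ x ∈ closure D, |u T x| ≤ M := by
  obtain ⟨hDo, -, hDb, -⟩ := hD
  have hDc : IsCompact (closure D) := hDb.isCompact_closure
  obtain ⟨R, hR⟩ := hDc.exists_bound_of_continuousOn (sumCoord d).continuous.continuousOn
  set K := (Hb + C + c + 1) / c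
  have hK : c * K = Hb + C + c + 1 := mul_div_cancel₀ _ hc.ne'
  refine ⟨(2 / c * T⁻¹ + K) * (1 + 2 * |R|), by positivity, ?_⟩
  intro ν hν A hA _ hS h u _ hhb hu hpde hbc x hx
  have hAj : ∀ j, Differentiable ℝ fun v => A v j := fun j =>
    (contDiff_pi.1 hA j).differentiable (by norm_num)
  have hR' : ∀ y ∈ closure D, |sumCoord d y| ≤ |R| := fun y hy => (hR y hy).trans (le_abs_self R)
  have bound := fun σ (hσ : σ = 1 ∨ σ = -1) =>
    mul_le_barrier hDo hDc hR' hc hC hHb hK hT hν.le hσ hAj hS hhb hu hpde hbc x hx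
  rw [abs_le]
  constructor <;> linarith [bound 1 (.inl rfl), bound (-1) (.inr rfl)]

end
end

section
/- Let D⊂ℝ^d be a bounded domain, T>0, ν>0, and let A∈C²(ℝ,ℝ^d) satisfy (Σ_{j=1}^d A_j'(u))·sgn(u) ≥ c|u| − C for all u∈ℝ with c,C>0. Let h be bounded on Q_T=[0,T]×D, let L ≥ 0, α⁻ = min{x_j : x∈D̄, 1≤j≤d}, and for ε∈(0,1] set B_ε = max{2c⁻¹, 2C(T+ε), C⁻¹(T+ε)‖h‖_{L^∞}} and u_ε⁺(t,x) = [B_ε(B_ε + Σ_{j=1}^d x_j − dα⁻) + Lε]/(t+ε). Then u_ε⁺ > 0 on Q̄_T, u_ε⁺(0,x) ≥ L for all x∈D̄, and F(u_ε⁺)(t,x) := ∂_t u_ε⁺ + Σ_j ∂_{x_j}(A_j(u_ε⁺)) − νΔu_ε⁺ ≥ ‖h‖_{L^∞} for all (t,x)∈Q_T. -/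
open Set MeasureTheory Filter Topology

noncomputable section

/-!
Write `τ = t + ε`. Since `Σⱼ xⱼ ≥ d α⁻` on `D̄`, `u_ε⁺ = K(x)/τ` with `K` affine in `x` and
`K ≥ B² + Lε > 0` on `D̄`, so `Δu_ε⁺ = 0`, `∂ₜu_ε⁺ = -u_ε⁺/τ` and
`div A(u_ε⁺) = (Σⱼ Aⱼ'(u_ε⁺)) B/τ ≥ (c u_ε⁺ - C) B/τ` by the sign condition. Hence
`F(u_ε⁺) ≥ (u_ε⁺ (cB - 1) - CB)/τ ≥ CB/τ ≥ ‖h‖`, using `cB ≥ 2`, `τ u_ε⁺ ≥ B² ≥ 2CBτ` and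
`τ ‖h‖ ≤ CB`.
-/

section

variable {d : ℕ}

section Coordinates

def sumCoords (d : ℕ) : Euc d →L[ℝ] ℝ := ∑ j : Fin d, EuclideanSpace.proj j

lemma sumCoords_apply (x : Euc d) : sumCoords d x = ∑ j, x j := by
  simp [sumCoords]

lemma sumCoords_ebasis (j : Fin d) : sumCoords d (ebasis d j) = 1 := by
  simp [sumCoords, ebasis]

lemma sInf_coords_le {S : Set (Euc d)} (hS : Bornology.IsBounded S) {x : Euc d} (hx : x ∈ S)
    (j : Fin d) : sInf {r : ℝ | ∃ x ∈ S, ∃ j : Fin d, r = x j} ≤ x j := by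
  obtain ⟨R, hR⟩ := isBounded_iff_forall_norm_le.mp hS
  refine csInf_le ⟨-R, ?_⟩ ⟨x, hx, j, rfl⟩
  rintro _ ⟨y, hy, i, rfl⟩
  have := (Real.norm_eq_abs _ ▸ PiLp.norm_apply_le y i).trans (hR y hy)
  linarith [neg_abs_le (y i)]

lemma card_mul_sInf_coords_le_sum {S : Set (Euc d)} (hS : Bornology.IsBounded S) {x : Euc d}
    (hx : x ∈ S) : d * sInf {r : ℝ | ∃ x ∈ S, ∃ j : Fin d, r = x j} ≤ ∑ j, x j := by
  simpa using Finset.sum_le_sum fun j (_ : j ∈ Finset.univ) => sInf_coords_le hS hx j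

end Coordinates

section Operators

variable {f : Euc d → ℝ} {L : Euc d →L[ℝ] ℝ}

lemma lapl_eq_zero_of_hasFDerivAt (hf : ∀ y, HasFDerivAt f L y) (x : Euc d) :
    lapl f x = 0 := by
  have hconst : (fun y => fderiv ℝ f y) = fun _ => L := funext fun y => (hf y).fderiv
  simp [lapl, dx2, hconst]

lemma divA_eq_of_hasFDerivAt {A : ℝ → Fin d → ℝ} {x : Euc d}
    (hA : ∀ j, DifferentiableAt ℝ (fun v => A v j) (f x)) (hf : HasFDerivAt f L x) :
    divA A f x = ∑ j, deriv (fun v => A v j) (f x) * L (ebasis d j) := by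
  refine Finset.sum_congr rfl fun j _ => ?_
  have hcomp := ((hA j).hasDerivAt.comp_hasFDerivAt x hf).fderiv
  rw [Function.comp_def] at hcomp
  simp [hcomp]

end Operators

def affineBarrier (d : ℕ) (K₀ B ε : ℝ) (t : ℝ) (x : Euc d) : ℝ := (K₀ + B * ∑ j, x j) / (t + ε)

variable {K₀ B ε t : ℝ}

lemma hasFDerivAt_affineBarrier (x : Euc d) :
    HasFDerivAt (affineBarrier d K₀ B ε t) ((B / (t + ε)) • sumCoords d) x := by
  have : affineBarrier d K₀ B ε t = fun y => ((B / (t + ε)) • sumCoords d) y + K₀ / (t + ε) := by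
    funext y
    simp only [affineBarrier, FunLike.coe_smul, Pi.smul_apply, sumCoords_apply,
      smul_eq_mul]
    ring
  rw [this]
  exact ((B / (t + ε)) • sumCoords d).hasFDerivAt.add_const _

lemma mul_affineBarrier (ht : t + ε ≠ 0) (x : Euc d) :
    (t + ε) * affineBarrier d K₀ B ε t x = K₀ + B * ∑ j, x j :=
  mul_div_cancel₀ _ ht

lemma lapl_affineBarrier (x : Euc d) : lapl (affineBarrier d K₀ B ε t) x = 0 :=
  lapl_eq_zero_of_hasFDerivAt hasFDerivAt_affineBarrier x

lemma dtt_affineBarrier (ht : t + ε ≠ 0) (x : Euc d) :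
    dtt (affineBarrier d K₀ B ε) t x = -affineBarrier d K₀ B ε t x / (t + ε) := by
  have hinv : HasDerivAt (fun s => (s + ε)⁻¹) (-1 / (t + ε) ^ 2) t := by
    simpa using ((hasDerivAt_id t).add_const ε).fun_inv ht
  simp only [dtt, affineBarrier, div_eq_mul_inv]
  rw [(hinv.const_mul (K₀ + B * ∑ j, x j)).deriv]
  field_simp

lemma divA_affineBarrier {A : ℝ → Fin d → ℝ} (hA : ∀ j, Differentiable ℝ fun v => A v j)
    (x : Euc d) :
    divA A (affineBarrier d K₀ B ε t) x
      = (∑ j, deriv (fun v => A v j) (affineBarrier d K₀ B ε t x)) * (B / (t + ε)) := by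
  rw [divA_eq_of_hasFDerivAt (fun j => hA j _) (hasFDerivAt_affineBarrier x), Finset.sum_mul]
  simp [sumCoords_ebasis]

lemma SignCondition.le_sum_deriv {A : ℝ → Fin d → ℝ} {c C u : ℝ} (hsgn : SignCondition A c C)
    (hu : 0 < u) : c * u - C ≤ ∑ j, deriv (fun v => A v j) u := by
  simpa [abs_of_pos hu, Real.sign_of_pos hu] using hsgn u

lemma barrier_slope_bounds {c C τ H B : ℝ} (hc : 0 < c) (hC : 0 < C)
    (hB : B = max (max (2 / c) (2 * C * τ)) (C⁻¹ * τ * H)) :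
    0 < B ∧ 2 ≤ c * B ∧ 2 * C * τ ≤ B ∧ τ * H ≤ C * B := by
  have hBc : 2 / c ≤ B := hB ▸ le_max_of_le_left (le_max_left _ _)
  have hBH : C⁻¹ * (τ * H) ≤ B := mul_assoc C⁻¹ τ H ▸ hB ▸ le_max_right _ _
  refine ⟨(div_pos two_pos hc).trans_le hBc, ?_, hB ▸ le_max_of_le_left (le_max_right _ _), ?_⟩
  · rwa [div_le_iff₀ hc, mul_comm] at hBc
  · rwa [inv_mul_le_iff₀ hC] at hBH

/-- The right side bounds `F(u)` from below via the sign condition, at a time `τ ≤ τ₀`. -/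
lemma le_neg_div_add_mul_div {B C c τ τ₀ u H : ℝ} (hτ : 0 < τ) (hττ₀ : τ ≤ τ₀) (hC : 0 ≤ C)
    (hB : 0 ≤ B) (hcB : 2 ≤ c * B) (hBτ : 2 * C * τ₀ ≤ B) (hH : τ₀ * H ≤ C * B)
    (hu : B ^ 2 ≤ τ * u) :
    H ≤ -u / τ + (c * u - C) * (B / τ) := by
  have hu0 : 0 ≤ u := nonneg_of_mul_nonneg_right (by nlinarith) hτ
  have hu2 : 2 * C * B ≤ u := by nlinarith
  have hτH : τ * H ≤ C * B := by
    rcases le_total 0 H with hH0 | hH0 <;> nlinarith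
  have hrhs : -u / τ + (c * u - C) * (B / τ) = (u * (c * B - 1) - C * B) / τ := by
    field_simp
    ring
  rw [hrhs, le_div_iff₀ hτ]
  nlinarith

end

theorem stmt_4_general {d : ℕ} (D : Set (Euc d)) (hD : Bornology.IsBounded D)
    (T ν c C L : ℝ) (hc : 0 < c) (hC : 0 < C) (hL : 0 ≤ L)
    (A : ℝ → Fin d → ℝ) (hA : ContDiff ℝ 2 A) (hsgn : SignCondition A c C)
    (ε : ℝ) (hε : ε ∈ Ioc (0:ℝ) 1)
    (Hsup : ℝ)
    (αm : ℝ) (hαm : αm = sInf {r : ℝ | ∃ x ∈ closure D, ∃ j : Fin d, r = x j})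
    (Bε : ℝ) (hBε : Bε = max (max (2 / c) (2 * C * (T + ε))) (C⁻¹ * (T + ε) * Hsup))
    (uplus : ℝ → Euc d → ℝ)
    (huplus : uplus = fun t x => (Bε * (Bε + (∑ j : Fin d, x j) - d * αm) + L * ε) / (t + ε)) :
    (∀ t ∈ Icc (0:ℝ) T, ∀ x ∈ closure D, 0 < uplus t x) ∧
    (∀ x ∈ closure D, L ≤ uplus 0 x) ∧
    (∀ t ∈ Icc (0:ℝ) T, ∀ x ∈ D,
      Hsup ≤ dtt uplus t x + divA A (uplus t) x - ν * lapl (uplus t) x) := by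
  obtain ⟨hε, -⟩ := hε
  obtain ⟨hB, hcB, hBC, hBH⟩ := barrier_slope_bounds hc hC hBε
  set K₀ := Bε * (Bε - d * αm) + L * ε
  obtain rfl : uplus = affineBarrier d K₀ Bε ε := by
    subst huplus
    funext t x
    simp only [affineBarrier, K₀]
    ring_nf
  clear huplus
  have hnum : ∀ t ≥ 0, ∀ x ∈ closure D,
      Bε ^ 2 + L * ε ≤ (t + ε) * affineBarrier d K₀ Bε ε t x := by
    intro t ht x hx
    rw [mul_affineBarrier (by positivity)]
    nlinarith [hαm ▸ card_mul_sInf_coords_le_sum hD.closure hx]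
  have hpos : ∀ t ∈ Icc (0:ℝ) T, ∀ x ∈ closure D, 0 < affineBarrier d K₀ Bε ε t x :=
    fun t ht x hx => pos_of_mul_pos_right
      ((by positivity : 0 < Bε ^ 2 + L * ε).trans_le (hnum t ht.1 x hx)) (by linarith [ht.1])
  refine ⟨hpos, fun x hx => by nlinarith [hnum 0 le_rfl x hx], fun t ht x hx => ?_⟩
  have hτ : 0 < t + ε := by linarith [ht.1]
  rw [dtt_affineBarrier hτ.ne',
    divA_affineBarrier fun j => (contDiff_pi.mp hA j).differentiable (by norm_num),
    lapl_affineBarrier, mul_zero, sub_zero]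
  calc Hsup ≤ -affineBarrier d K₀ Bε ε t x / (t + ε)
        + (c * affineBarrier d K₀ Bε ε t x - C) * (Bε / (t + ε)) :=
        le_neg_div_add_mul_div hτ (by linarith [ht.2]) hC.le hB.le hcB hBC hBH
          (by nlinarith [hnum t ht.1 x (subset_closure hx), mul_nonneg hL hε.le])
    _ ≤ _ := by gcongr; exact hsgn.le_sum_deriv (hpos t ht x (subset_closure hx))

/-- the explicit barrier `u_ε⁺` from the proof of Proposition 1.4 is positive,
dominates `L` at `t = 0`, and is a supersolution: `F(u_ε⁺) ≥ ‖h‖_{L^∞}` on `Q_T`. -/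
theorem stmt_4 {d : ℕ} (D : Set (Euc d)) (hD : Bornology.IsBounded D)
    (T ν c C L : ℝ) (hT : 0 < T) (hν : 0 < ν) (hc : 0 < c) (hC : 0 < C) (hL : 0 ≤ L)
    (A : ℝ → Fin d → ℝ) (hA : ContDiff ℝ 2 A) (hsgn : SignCondition A c C)
    (h : ℝ → Euc d → ℝ) (hbd : ∃ N, ∀ t ∈ Icc (0:ℝ) T, ∀ x ∈ D, |h t x| ≤ N)
    (ε : ℝ) (hε : ε ∈ Ioc (0:ℝ) 1)
    (Hsup : ℝ) (hHsup : Hsup = sSup ((fun p : ℝ × Euc d => |h p.1 p.2|) '' (Icc 0 T ×ˢ D)))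
    (αm : ℝ) (hαm : αm = sInf {r : ℝ | ∃ x ∈ closure D, ∃ j : Fin d, r = x j})
    (Bε : ℝ) (hBε : Bε = max (max (2 / c) (2 * C * (T + ε))) (C⁻¹ * (T + ε) * Hsup))
    (uplus : ℝ → Euc d → ℝ)
    (huplus : uplus = fun t x => (Bε * (Bε + (∑ j : Fin d, x j) - d * αm) + L * ε) / (t + ε)) :
    (∀ t ∈ Icc (0:ℝ) T, ∀ x ∈ closure D, 0 < uplus t x) ∧
    (∀ x ∈ closure D, L ≤ uplus 0 x) ∧
    (∀ t ∈ Icc (0:ℝ) T, ∀ x ∈ D,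
      Hsup ≤ dtt uplus t x + divA A (uplus t) x - ν * lapl (uplus t) x) :=
  stmt_4_general D hD T ν c C L hc hC hL A hA hsgn ε hε Hsup αm hαm Bε hBε uplus huplus

end
end
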